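/- arXiv:1807.05627 — 5 statements merged into one kernel-verified Lean document; each statement's English description precedes it below -/
import Mathlib

section
/- There exists an invertible 8×8 rational matrix C such that both C⁻¹M₊C and C⁻¹M₋C are lower triangular, with diagonal (4,2,-2,-2,1,1,0,0) in both cases; i.e., M₊ and M₋ are simultaneously lower-triangularizable with the same diagonal. -/
/-!
The last `k` columns of `triangularizer` span, for every `k`, a subspace invariant under both
`M₊` and `M₋`; in matrix form `M± C = C T±` with `T±` lower triangular. With `C⁻¹` written
down as well, every claim is a finite exact computation.
-/

def Mplus : Matrix (Fin 8) (Fin 8) ℚ :=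
  !![0,0,0,0,1,1,1,1;
     0,0,1,3,0,0,0,0;
     0,2,2,0,0,0,0,0;
     3,1,0,0,0,0,0,0;
     1,1,1,1,0,0,0,0;
     0,0,0,0,0,0,1,3;
     0,0,0,0,0,2,2,0;
     0,0,0,0,3,1,0,0]

def Mminus : Matrix (Fin 8) (Fin 8) ℚ :=
  !![0,0,1,3,0,0,0,0;
     0,2,2,0,0,0,0,0;
     3,1,0,0,0,0,0,0;
     0,0,0,0,1,1,1,1;
     0,0,0,0,0,0,1,3;
     0,0,0,0,0,2,2,0;
     0,0,0,0,3,1,0,0;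
     1,1,1,1,0,0,0,0]

theorem Matrix.inv_mul_mul_eq_of_mul_eq_mul {n R : Type*} [Fintype n] [DecidableEq n] [CommRing R]
    {C M T : Matrix n n R} (hC : IsUnit C.det) (h : M * C = C * T) : C⁻¹ * M * C = T := by
  rw [Matrix.mul_assoc, h, Matrix.nonsing_inv_mul_cancel_left C T hC]

def triangularizer : Matrix (Fin 8) (Fin 8) ℚ :=
  !![1,-1,0,-1,0,1,0,-1;
     0,0,0,1,0,-2,0,3;
     0,0,0,0,0,1,0,-3;
     0,0,0,0,0,0,0,1;
     0,1,-1,0,1,0,-1,0;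
     0,0,1,0,-2,0,3,0;
     0,0,0,0,1,0,-3,0;
     0,0,0,0,0,0,1,0]

def triangularizerInv : Matrix (Fin 8) (Fin 8) ℚ :=
  !![1,1,1,1,1,1,1,1;
     0,0,0,0,1,1,1,1;
     0,0,0,0,0,1,2,3;
     0,1,2,3,0,0,0,0;
     0,0,0,0,0,0,1,3;
     0,0,1,3,0,0,0,0;
     0,0,0,0,0,0,0,1;
     0,0,0,1,0,0,0,0]

def Tplus : Matrix (Fin 8) (Fin 8) ℚ :=
  !![4,0,0,0,0,0,0,0;
     1,2,0,0,0,0,0,0;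
     0,9,-2,0,0,0,0,0;
     9,-9,0,-2,0,0,0,0;
     0,9,-4,0,1,0,0,0;
     9,-9,0,-4,0,1,0,0;
     0,3,-2,0,1,0,0,0;
     3,-3,0,-2,0,1,0,0]

def Tminus : Matrix (Fin 8) (Fin 8) ℚ :=
  !![4,0,0,0,0,0,0,0;
     1,2,0,0,0,0,0,0;
     3,3,-2,0,0,0,0,0;
     6,-3,0,-2,0,0,0,0;
     3,0,-2,0,1,0,0,0;
     3,0,0,-2,0,1,0,0;
     1,-1,0,0,0,0,0,0;
     0,1,0,0,0,0,0,0]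

theorem triangularizer_mul_triangularizerInv : triangularizer * triangularizerInv = 1 := by
  ext i j
  fin_cases i <;> fin_cases j <;>
    norm_num [Matrix.mul_apply, Fin.sum_univ_succ, triangularizer, triangularizerInv,
      Matrix.one_apply]

theorem isUnit_det_triangularizer : IsUnit triangularizer.det :=
  Matrix.isUnit_det_of_right_inverse triangularizer_mul_triangularizerInv

theorem Mplus_mul_triangularizer : Mplus * triangularizer = triangularizer * Tplus := by
  ext i j
  fin_cases i <;> fin_cases j <;>
    norm_num [Matrix.mul_apply, Fin.sum_univ_succ, Mplus, triangularizer, Tplus]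

theorem Mminus_mul_triangularizer : Mminus * triangularizer = triangularizer * Tminus := by
  ext i j
  fin_cases i <;> fin_cases j <;>
    norm_num [Matrix.mul_apply, Fin.sum_univ_succ, Mminus, triangularizer, Tminus]

theorem Tplus_blockTriangular : Tplus.BlockTriangular OrderDual.toDual := by decide

theorem Tminus_blockTriangular : Tminus.BlockTriangular OrderDual.toDual := by decide

theorem Tplus_diag : Tplus.diag = ![4, 2, -2, -2, 1, 1, 0, 0] := by decide

theorem Tminus_diag : Tminus.diag = ![4, 2, -2, -2, 1, 1, 0, 0] := by decide

/-- `M₊` and `M₋` are simultaneously lower-triangularizable over `ℚ`,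
with common diagonal `(4, 2, -2, -2, 1, 1, 0, 0)`. -/
theorem simultaneous_triangularization :
    ∃ C : Matrix (Fin 8) (Fin 8) ℚ, IsUnit C.det ∧
      (∀ i j : Fin 8, i < j → (C⁻¹ * Mplus * C) i j = 0) ∧
      (∀ i j : Fin 8, i < j → (C⁻¹ * Mminus * C) i j = 0) ∧
      (∀ i : Fin 8, (C⁻¹ * Mplus * C) i i = ![(4:ℚ), 2, -2, -2, 1, 1, 0, 0] i) ∧
      (∀ i : Fin 8, (C⁻¹ * Mminus * C) i i = ![(4:ℚ), 2, -2, -2, 1, 1, 0, 0] i) := by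
  have hplus := Matrix.inv_mul_mul_eq_of_mul_eq_mul isUnit_det_triangularizer
    Mplus_mul_triangularizer
  have hminus := Matrix.inv_mul_mul_eq_of_mul_eq_mul isUnit_det_triangularizer
    Mminus_mul_triangularizer
  refine ⟨triangularizer, isUnit_det_triangularizer, ?_⟩
  rw [hplus, hminus]
  exact ⟨fun _ _ h => Tplus_blockTriangular h, fun _ _ h => Tminus_blockTriangular h,
    congrFun Tplus_diag, congrFun Tminus_diag⟩
end

section
/- The 8×8 substitution matrix M_P (for the all-up folding pattern) satisfies: M_P = M₊², M_P² has all entries strictly positive (so M_P is primitive), and the eigenvalues of M_P with multiplicity are 16, 4, 4, 4, 1, 1, 0, 0. -/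
def MP : Matrix (Fin 8) (Fin 8) ℚ :=
  !![1,1,1,1,3,3,3,3;
     9,5,2,0,0,0,0,0;
     0,4,6,6,0,0,0,0;
     0,0,1,3,3,3,3,3;
     3,3,3,3,1,1,1,1;
     0,0,0,0,9,5,2,0;
     0,0,0,0,0,4,6,6;
     3,3,3,3,0,0,1,3]


/-! The columns of `eigenbasisMP` are eigenvectors of `M_P` for the eigenvalues
`16, 4, 4, 4, 1, 1, 0, 0`, and `eigenbasisMPInv` is an inverse of it, so `M_P` is similar to the
diagonal matrix of these eigenvalues and has the same characteristic polynomial. Every other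
claim is a finite computation with rational matrices. -/

namespace Matrix

open Polynomial

variable {n R : Type*} [Fintype n] [DecidableEq n] [CommRing R]

theorem charpoly_eq_prod_of_mul_eq_mul_diagonal {A P Q : Matrix n n R} {d : n → R}
    (hQP : Q * P = 1) (hAP : A * P = P * diagonal d) : A.charpoly = ∏ i, (X - C (d i)) := by
  have hPQ : P * Q = 1 := mul_eq_one_comm.mp hQP
  calc A.charpoly = (P * (diagonal d * Q)).charpoly := by
        rw [← Matrix.mul_assoc, ← hAP, Matrix.mul_assoc, hPQ, Matrix.mul_one]
    _ = (diagonal d * (Q * P)).charpoly := by rw [charpoly_mul_comm, Matrix.mul_assoc]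
    _ = ∏ i, (X - C (d i)) := by rw [hQP, Matrix.mul_one, charpoly_diagonal]

end Matrix

def eigenvaluesMP : Fin 8 → ℚ := ![16, 4, 4, 4, 1, 1, 0, 0]

def eigenbasisMP : Matrix (Fin 8) (Fin 8) ℚ :=
  !![1,  0,  1, -1,  0,  0, -1,  0;
     1, -2,  3, -3,  1,  0,  3,  0;
     1,  1, -6,  6, -2,  0, -3,  0;
     1,  1,  0,  0,  1,  0,  1,  0;
     1,  0, -1,  1,  0,  0,  0, -1;
     1,  0, -3, -9,  0,  1,  0,  3;
     1,  0,  6,  0,  0, -2,  0, -3;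
     1,  0,  0,  6,  0,  1,  0,  1]

def eigenbasisMPInv : Matrix (Fin 8) (Fin 8) ℚ :=
  !![ 1/8,  1/8,  1/8,  1/8,  1/8,  1/8,   1/8,  1/8;
       -1, -2/3, -1/3,    0,  1/2,  1/2,   1/2,  1/2;
     -1/6, -1/6, -1/6, -1/6, 1/12, 5/36,  7/36,  1/4;
     1/12, 1/12, 1/12, 1/12, -1/6, -1/9, -1/18,    0;
        2,  2/3,  1/3,    1,   -1,   -1,    -1,   -1;
       -1,   -1,   -1,   -1,    2,  2/3,   1/3,    1;
     -9/8, -1/8, -1/8, -1/8,  3/8,  3/8,   3/8,  3/8;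
      3/8,  3/8,  3/8,  3/8, -9/8, -1/8,  -1/8, -1/8]

theorem eigenbasisMPInv_mul_eigenbasisMP : eigenbasisMPInv * eigenbasisMP = 1 := by
  decide +kernel

theorem MP_mul_eigenbasisMP :
    MP * eigenbasisMP = eigenbasisMP * Matrix.diagonal eigenvaluesMP := by
  decide +kernel

theorem MP_eq_Mplus_mul_Mplus : MP = Mplus * Mplus := by
  decide +kernel

theorem MP_mul_MP_pos : ∀ i j : Fin 8, 0 < (MP * MP) i j := by
  decide +kernel

open Polynomial in
/-- `M_P = M₊²`, `M_P²` has strictly positive entries (so `M_P` is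
primitive), and the eigenvalues of `M_P` with multiplicity are
`16, 4, 4, 4, 1, 1, 0, 0`. -/
theorem MP_primitive_and_eigenvalues :
    MP = Mplus * Mplus ∧
    (∀ i j : Fin 8, 0 < (MP * MP) i j) ∧
    MP.charpoly = (X - C 16) * (X - C 4) ^ 3 * (X - C 1) ^ 2 * X ^ 2 := by
  refine ⟨MP_eq_Mplus_mul_Mplus, MP_mul_MP_pos, ?_⟩
  rw [Matrix.charpoly_eq_prod_of_mul_eq_mul_diagonal eigenbasisMPInv_mul_eigenbasisMP
    MP_mul_eigenbasisMP, Fin.prod_univ_eight]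
  simp only [eigenvaluesMP, Matrix.cons_val_zero, Matrix.cons_val_one, Matrix.cons_val, map_one,
    map_zero, sub_zero]
  ring
end

section
/- The matrix M_P has (1,1,1,1,1,1,1,1) as both a left eigenvector and a right eigenvector with eigenvalue 16 (its Perron–Frobenius eigenvalue), and 16 strictly exceeds the absolute value of every other eigenvalue of M_P. -/
noncomputable def MPC : Matrix (Fin 8) (Fin 8) ℂ := MP.map (Rat.cast)

/-!
`M_P` is annihilated by `X (X - 1) (X - 4) (X - 16)`, an identity of rational matrices verified by
direct computation. By the spectral mapping inclusion `p(σ(a)) ⊆ σ(p(a))`, every complex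
eigenvalue of `M_P` is a root of that polynomial, hence lies in `{0, 1, 4, 16}`.
-/

open Polynomial

theorem spectrum.aeval_eq_zero_of_mem_of_aeval_eq_zero {K L A : Type*} [Field K] [Field L]
    [Algebra K L] [Ring A] [Nontrivial A] [Algebra K A] [Algebra L A] [IsScalarTower K L A]
    {a : A} {p : K[X]} (hp : aeval a p = 0) {μ : L} (hμ : μ ∈ spectrum L a) :
    aeval μ p = 0 := by
  have := spectrum.subset_polynomial_aeval a (p.map (algebraMap K L)) ⟨μ, hμ, rfl⟩
  rw [aeval_map_algebraMap, hp, spectrum.zero_eq, Set.mem_singleton_iff] at this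
  simpa only [eval_map_algebraMap] using this

theorem aeval_MP_eq_zero : aeval MP (X * (X - 1) * (X - 4) * (X - 16) : ℚ[X]) = 0 := by
  simp only [map_mul, map_sub, aeval_X, map_one, map_ofNat]
  decide +kernel

theorem MPC_eq_mapMatrix : MPC = (Algebra.ofId ℚ ℂ).mapMatrix MP := by
  ext
  simp [MPC]

theorem aeval_MPC_eq_zero : aeval MPC (X * (X - 1) * (X - 4) * (X - 16) : ℚ[X]) = 0 := by
  rw [MPC_eq_mapMatrix, aeval_algHom_apply, aeval_MP_eq_zero, map_zero]

/-- `(1,…,1)` is both a left and a right eigenvector of `M_P` with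
eigenvalue 16, and 16 strictly dominates the absolute value of every
other eigenvalue of `M_P`. -/
theorem MP_perron_frobenius :
    Matrix.vecMul ![1,1,1,1,1,1,1,1] MP = (16 : ℚ) • ![1,1,1,1,1,1,1,1] ∧
    MP.mulVec ![1,1,1,1,1,1,1,1] = (16 : ℚ) • ![1,1,1,1,1,1,1,1] ∧
    ∀ μ : ℂ, MPC.charpoly.IsRoot μ → μ ≠ 16 → ‖μ‖ < 16 := by
  refine ⟨by decide +kernel, by decide +kernel, fun μ hroot hne => ?_⟩
  have hμ : ((μ = 0 ∨ μ = 1) ∨ μ = 4) ∨ μ = 16 := by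
    simpa [map_ofNat, sub_eq_zero] using
      spectrum.aeval_eq_zero_of_mem_of_aeval_eq_zero aeval_MPC_eq_zero
        (Matrix.mem_spectrum_iff_isRoot_charpoly.mpr hroot)
  rcases hμ with ((rfl | rfl) | rfl) | rfl
  · norm_num
  · norm_num
  · norm_num
  · exact absurd rfl hne
end

section
/- For the matrix M_{+-} = M₊M₋ there is no basis of eigenvectors; i.e., M₊M₋ is not diagonalizable (over ℂ). In particular its eigenvalue 4 = (-2)² has algebraic multiplicity greater than its geometric multiplicity. -/
/-!
If `M₊M₋ = C D C⁻¹` with `D` diagonal, then `q(M₊M₋) = C q(D) C⁻¹` for the squarefree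
`q = X(X - 1)(X - 4)(X - 16)`. Since `q(M₊M₋)² = 0` while `q(M₊M₋) ≠ 0`, `q(D)` would be a nonzero
nilpotent diagonal matrix over `ℂ`, which is impossible.
-/

def MplusC : Matrix (Fin 8) (Fin 8) ℂ :=
  !![0,0,0,0,1,1,1,1;
     0,0,1,3,0,0,0,0;
     0,2,2,0,0,0,0,0;
     3,1,0,0,0,0,0,0;
     1,1,1,1,0,0,0,0;
     0,0,0,0,0,0,1,3;
     0,0,0,0,0,2,2,0;
     0,0,0,0,3,1,0,0]

def MminusC : Matrix (Fin 8) (Fin 8) ℂ :=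
  !![0,0,1,3,0,0,0,0;
     0,2,2,0,0,0,0,0;
     3,1,0,0,0,0,0,0;
     0,0,0,0,1,1,1,1;
     0,0,0,0,0,0,1,3;
     0,0,0,0,0,2,2,0;
     0,0,0,0,3,1,0,0;
     1,1,1,1,0,0,0,0]

open Polynomial

namespace Matrix

variable {n R : Type*} [Fintype n] [DecidableEq n] [CommRing R]

theorem aeval_diagonal (d : n → R) (p : R[X]) :
    aeval (diagonal d) p = diagonal fun i => p.eval (d i) := by
  rw [← diagonalAlgHom_apply R, aeval_algHom_apply, aeval_pi_apply, diagonalAlgHom_apply]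
  simp only [coe_aeval_eq_eval]

theorem aeval_conj {C : Matrix n n R} (hC : IsUnit C.det) (A : Matrix n n R) (p : R[X]) :
    aeval (C * A * C⁻¹) p = C * aeval A p * C⁻¹ := by
  induction p using Polynomial.induction_on with
  | C a => simp [Algebra.algebraMap_eq_smul_one, mul_nonsing_inv _ hC]
  | add p q hp hq => simp [hp, hq, mul_add, add_mul]
  | monomial k a h =>
    rw [pow_succ, ← mul_assoc, map_mul, h, aeval_X, map_mul (aeval A) _ X, aeval_X]
    simp only [Matrix.mul_assoc, nonsing_inv_mul_cancel_left _ _ hC]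

theorem conj_eq_zero_iff {C : Matrix n n R} (hC : IsUnit C.det) {A : Matrix n n R} :
    C * A * C⁻¹ = 0 ↔ A = 0 := by
  rw [((isUnit_iff_isUnit_det _).2 (isUnit_nonsing_inv_det C hC)).mul_left_eq_zero,
    ((isUnit_iff_isUnit_det _).2 hC).mul_right_eq_zero]

theorem isNilpotent_conj_iff {C : Matrix n n R} (hC : IsUnit C.det) {A : Matrix n n R} :
    IsNilpotent (C * A * C⁻¹) ↔ IsNilpotent A := by
  have hpow (k : ℕ) : (C * A * C⁻¹) ^ k = C * A ^ k * C⁻¹ := by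
    simpa only [aeval_X_pow] using aeval_conj hC A (X ^ k)
  simp only [IsNilpotent, hpow, conj_eq_zero_iff hC]

theorem diagonal_eq_zero_of_isNilpotent [IsReduced R] {d : n → R}
    (h : IsNilpotent (diagonal d)) : diagonal d = 0 := by
  obtain ⟨k, hk⟩ := h
  rw [diagonal_pow, diagonal_eq_zero] at hk
  rw [diagonal_eq_zero]
  exact IsNilpotent.eq_zero ⟨k, hk⟩

theorem IsDiag.aeval_conj_eq_zero_of_isNilpotent [IsReduced R] {C D : Matrix n n R}
    (hD : D.IsDiag) (hC : IsUnit C.det) {p : R[X]}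
    (hp : IsNilpotent (aeval (C * D * C⁻¹) p)) : aeval (C * D * C⁻¹) p = 0 := by
  obtain ⟨d, rfl⟩ : ∃ d, D = diagonal d := ⟨_, hD.diagonal_diag.symm⟩
  rw [aeval_conj hC, aeval_diagonal] at hp ⊢
  rw [conj_eq_zero_iff hC]
  exact diagonal_eq_zero_of_isNilpotent ((isNilpotent_conj_iff hC).1 hp)

end Matrix

/-- The squarefree polynomial whose roots are the eigenvalues `0, 1, 4, 16` of `M₊M₋`. -/
noncomputable def eigenvaluePoly : ℂ[X] := X * (X - 1) * (X - 4) * (X - 16)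

/-- `M₊` over `ℤ` (with `MminusZ` below), where matrix identities can be checked by `decide`. -/
def MplusZ : Matrix (Fin 8) (Fin 8) ℤ :=
  !![0,0,0,0,1,1,1,1;
     0,0,1,3,0,0,0,0;
     0,2,2,0,0,0,0,0;
     3,1,0,0,0,0,0,0;
     1,1,1,1,0,0,0,0;
     0,0,0,0,0,0,1,3;
     0,0,0,0,0,2,2,0;
     0,0,0,0,3,1,0,0]

def MminusZ : Matrix (Fin 8) (Fin 8) ℤ :=
  !![0,0,1,3,0,0,0,0;
     0,2,2,0,0,0,0,0;
     3,1,0,0,0,0,0,0;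
     0,0,0,0,1,1,1,1;
     0,0,0,0,0,0,1,3;
     0,0,0,0,0,2,2,0;
     0,0,0,0,3,1,0,0;
     1,1,1,1,0,0,0,0]

def MplusMminusZ : Matrix (Fin 8) (Fin 8) ℤ := MplusZ * MminusZ

theorem mapMatrix_MplusMminusZ :
    (Int.castRingHom ℂ).mapMatrix MplusMminusZ = MplusC * MminusC := by
  rw [MplusMminusZ, map_mul]
  congr 1 <;> ext i j <;> fin_cases i <;> fin_cases j <;> simp [MplusZ, MminusZ, MplusC, MminusC]

theorem aeval_eigenvaluePoly_MplusC_mul_MminusC :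
    aeval (MplusC * MminusC) eigenvaluePoly = (Int.castRingHom ℂ).mapMatrix
      (MplusMminusZ * (MplusMminusZ - 1) * (MplusMminusZ - 4) * (MplusMminusZ - 16)) := by
  simp only [← mapMatrix_MplusMminusZ, eigenvaluePoly, map_mul, map_sub, map_one, map_ofNat,
    aeval_X]

theorem aeval_eigenvaluePoly_MplusC_mul_MminusC_sq :
    aeval (MplusC * MminusC) eigenvaluePoly ^ 2 = 0 := by
  rw [aeval_eigenvaluePoly_MplusC_mul_MminusC, ← map_pow, ← map_zero (Int.castRingHom ℂ).mapMatrix]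
  congr 1
  decide

theorem aeval_eigenvaluePoly_MplusC_mul_MminusC_ne_zero :
    aeval (MplusC * MminusC) eigenvaluePoly ≠ 0 := by
  rw [aeval_eigenvaluePoly_MplusC_mul_MminusC, ← map_zero (Int.castRingHom ℂ).mapMatrix]
  exact (Matrix.map_injective Int.cast_injective).ne (by decide)

/-- `M₊ M₋` is not diagonalizable over `ℂ`: it is not conjugate to any
diagonal matrix. -/
theorem MplusMminus_not_diagonalizable :
    ¬ ∃ (C D : Matrix (Fin 8) (Fin 8) ℂ), IsUnit C.det ∧ D.IsDiag ∧
      MplusC * MminusC = C * D * C⁻¹ := by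
  rintro ⟨C, D, hC, hD, hA⟩
  have hnil : IsNilpotent (aeval (MplusC * MminusC) eigenvaluePoly) :=
    ⟨2, aeval_eigenvaluePoly_MplusC_mul_MminusC_sq⟩
  rw [hA] at hnil
  apply aeval_eigenvaluePoly_MplusC_mul_MminusC_ne_zero
  rw [hA, hD.aeval_conj_eq_zero_of_isNilpotent hC hnil]
end

section
/- The subspace V = { x ∈ ℝ⁸ : x₁+x₂+x₃+x₄ = 0, x₅ = x₆ = x₇ = x₈ = 0 } is a 3-dimensional invariant subspace of both M₊ and M₋. -/
namespace Matrix

theorem mulVec_mem_ker_mulVecLin_of_mul_eq {R l n : Type*} [CommSemiring R] [Fintype l]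
    [Fintype n] {A : Matrix l n R} {M : Matrix n n R} {B : Matrix l l R} (h : A * M = B * A)
    {x : n → R} (hx : x ∈ LinearMap.ker A.mulVecLin) :
    M *ᵥ x ∈ LinearMap.ker A.mulVecLin := by
  rw [LinearMap.mem_ker, mulVecLin_apply] at hx ⊢
  rw [mulVec_mulVec, h, ← mulVec_mulVec, hx, mulVec_zero]

theorem finrank_ker_mulVecLin_of_mul_eq_one {K m n : Type*} [Field K] [Fintype m] [Fintype n]
    [DecidableEq m] {A : Matrix m n K} {B : Matrix n m K} (h : A * B = 1) :
    Module.finrank K (LinearMap.ker A.mulVecLin) = Fintype.card n - Fintype.card m := by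
  have hsurj : LinearMap.range A.mulVecLin = ⊤ :=
    LinearMap.range_eq_top.mpr (mulVec_surjective_iff_exists_right_inverse.mpr ⟨B, h⟩)
  have hrank := A.mulVecLin.finrank_range_add_finrank_ker
  rw [hsurj, finrank_top] at hrank
  simp only [Module.finrank_fintype_fun_eq_card] at hrank
  omega

end Matrix

open Matrix

def coarse : Matrix (Fin 5) (Fin 8) ℚ :=
  !![1,1,1,1,0,0,0,0;
     0,0,0,0,1,0,0,0;
     0,0,0,0,0,1,0,0;
     0,0,0,0,0,0,1,0;
     0,0,0,0,0,0,0,1]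

theorem coarse_mulVec (x : Fin 8 → ℚ) :
    coarse *ᵥ x = ![x 0 + x 1 + x 2 + x 3, x 4, x 5, x 6, x 7] := by
  ext i
  fin_cases i <;> simp [coarse, mulVec, dotProduct, Fin.sum_univ_eight]

theorem coarse_mul_section :
    coarse * (!![1,0,0,0,0; 0,0,0,0,0; 0,0,0,0,0; 0,0,0,0,0;
                 0,1,0,0,0; 0,0,1,0,0; 0,0,0,1,0; 0,0,0,0,1] : Matrix (Fin 8) (Fin 5) ℚ) = 1 := by
  ext i j
  fin_cases i <;> fin_cases j <;> simp [coarse, Matrix.mul_apply, Fin.sum_univ_eight]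

theorem coarse_mul_Mplus :
    coarse * Mplus =
      (!![3,1,1,1,1; 1,0,0,0,0; 0,0,0,1,3; 0,0,2,2,0; 0,3,1,0,0] : Matrix (Fin 5) (Fin 5) ℚ) *
        coarse := by
  ext i j
  fin_cases i <;> fin_cases j <;>
    simp [coarse, Mplus, Matrix.mul_apply, Fin.sum_univ_eight, Fin.sum_univ_five] <;> norm_num

theorem coarse_mul_Mminus :
    coarse * Mminus =
      (!![3,1,1,1,1; 0,0,0,1,3; 0,0,2,2,0; 0,3,1,0,0; 1,0,0,0,0] : Matrix (Fin 5) (Fin 5) ℚ) *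
        coarse := by
  ext i j
  fin_cases i <;> fin_cases j <;>
    simp [coarse, Mminus, Matrix.mul_apply, Fin.sum_univ_eight, Fin.sum_univ_five] <;> norm_num

/-- The subspace `V = {x : x₁+x₂+x₃+x₄ = 0, x₅ = x₆ = x₇ = x₈ = 0}` is a
3-dimensional subspace invariant under both `M₊` and `M₋`. -/
theorem invariant_subspace :
    ∃ V : Submodule ℚ (Fin 8 → ℚ),
      (V : Set (Fin 8 → ℚ)) =
        {x | x 0 + x 1 + x 2 + x 3 = 0 ∧ x 4 = 0 ∧ x 5 = 0 ∧ x 6 = 0 ∧ x 7 = 0} ∧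
      Module.finrank ℚ V = 3 ∧
      ∀ x ∈ V, Mplus.mulVec x ∈ V ∧ Mminus.mulVec x ∈ V := by
  refine ⟨LinearMap.ker coarse.mulVecLin, ?_, ?_, fun x hx => ⟨?_, ?_⟩⟩
  · ext x
    simp [coarse_mulVec]
  · simpa using finrank_ker_mulVecLin_of_mul_eq_one coarse_mul_section
  · exact mulVec_mem_ker_mulVecLin_of_mul_eq coarse_mul_Mplus hx
  · exact mulVec_mem_ker_mulVecLin_of_mul_eq coarse_mul_Mminus hx
end
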